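/- arXiv:2602.00177 — 2 statements merged into one kernel-verified Lean document; each statement's English description precedes it below -/
import Mathlib

section
/- Let Ω ⊆ ℂⁿ be a convex Reinhardt domain and let f be holomorphic on Ω with Re(∂f/∂z_j(z)) > 0 for all z ∈ Ω and all j = 1,…,n. Then f separates all pairs of points whose difference has nonnegative real coordinates: for all z, w ∈ Ω with z ≠ w such that w_j − z_j is a nonnegative real number for every j = 1,…,n, one has f(z) ≠ f(w). (Multidimensional Noshiro–Warschawski criterion, Corollary 2.1.) -/
/-!
The restriction of `Re f` to the segment from `z` to `w` has derivative
`Re (df(w - z)) = ∑ⱼ (w j - z j) Re (∂f/∂z_j)`, which is positive since the coefficients are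
nonnegative reals, not all zero. So `Re f` strictly increases along the segment, which lies in `Ω`
by convexity, and `f z ≠ f w`.
-/

open Complex Finset

noncomputable def pder {n : ℕ} (f : (Fin n → ℂ) → ℂ) (z : Fin n → ℂ) (j : Fin n) : ℂ :=
  fderiv ℂ f z (Pi.single j 1)

noncomputable def pder2 {n : ℕ} (f : (Fin n → ℂ) → ℂ) (z : Fin n → ℂ) (j k : Fin n) : ℂ :=
  fderiv ℂ (fun w => pder f w k) z (Pi.single j 1)

def polydisk (n : ℕ) : Set (Fin n → ℂ) := {z | ∀ j, ‖z j‖ < 1}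

/-- The class `𝓑_n(M)` of normalized holomorphic functions on the unit polydisk. -/
def memB (n : ℕ) (M : ℝ) (f : (Fin n → ℂ) → ℂ) : Prop :=
  (∀ z ∈ polydisk n, DifferentiableAt ℂ f z) ∧ f 0 = 0 ∧
    (∀ j : Fin n, pder f 0 j = 1) ∧
    ∀ z ∈ polydisk n, ∑ l, ∑ j, ∑ k, ‖z l * pder2 f z j k‖ ≤ M

/-- The class `𝓑_{H_n^0}(M)` of normalized pluriharmonic mappings `f = h + conj ∘ g`. -/
def memBH (n : ℕ) (M : ℝ) (h g : (Fin n → ℂ) → ℂ) : Prop :=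
  (∀ z ∈ polydisk n, DifferentiableAt ℂ h z) ∧ (∀ z ∈ polydisk n, DifferentiableAt ℂ g z) ∧
    h 0 = 0 ∧ g 0 = 0 ∧ (∀ j : Fin n, pder h 0 j = 1) ∧ (∀ j : Fin n, pder g 0 j = 0) ∧
    ∀ z ∈ polydisk n, ∑ l, ∑ j, ∑ k,
      (‖z l * pder2 h z j k‖ + ‖z l * pder2 g z j k‖) ≤ M

theorem re_lt_re_of_re_fderiv_pos_on_segment {E : Type*} [NormedAddCommGroup E]
    [NormedSpace ℂ E] {f : E → ℂ} {z w : E}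
    (hf : ∀ x ∈ segment ℝ z w, DifferentiableAt ℂ f x)
    (hpos : ∀ x ∈ segment ℝ z w, 0 < (fderiv ℂ f x (w - z)).re) :
    (f z).re < (f w).re := by
  set γ : ℝ → E := fun t => AffineMap.lineMap (k := ℝ) z w t
  have hγ : ∀ t ∈ Set.Icc (0 : ℝ) 1, γ t ∈ segment ℝ z w := fun t ht =>
    segment_eq_image_lineMap ℝ z w ▸ Set.mem_image_of_mem _ ht
  have hderiv : ∀ t ∈ Set.Icc (0 : ℝ) 1,
      HasDerivAt (fun t => (f (γ t)).re) (fderiv ℂ f (γ t) (w - z)).re t := fun t ht =>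
    (reCLM.hasFDerivAt.comp_hasDerivAt t
      (((hf _ (hγ t ht)).hasFDerivAt.restrictScalars ℝ).comp_hasDerivAt t
        AffineMap.hasDerivAt_lineMap))
  obtain ⟨c, hc, hslope⟩ := exists_hasDerivAt_eq_slope (fun t => (f (γ t)).re) _ zero_lt_one
    (fun t ht => (hderiv t ht).continuousAt.continuousWithinAt)
    (fun t ht => hderiv t (Set.Ioo_subset_Icc_self ht))
  have hpos_c := hpos _ (hγ c (Set.Ioo_subset_Icc_self hc))
  simp only [γ, AffineMap.lineMap_apply_zero, AffineMap.lineMap_apply_one, sub_zero,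
    div_one] at hslope
  linarith

theorem fderiv_apply_eq_sum_pder {n : ℕ} (f : (Fin n → ℂ) → ℂ) (x v : Fin n → ℂ) :
    fderiv ℂ f x v = ∑ j, v j * pder f x j := by
  conv_lhs => rw [← Finset.univ_sum_single v]
  refine (map_sum _ _ _).trans (Finset.sum_congr rfl fun j _ => ?_)
  rw [pder, ← smul_eq_mul, ← map_smul, ← Pi.single_smul', smul_eq_mul, mul_one]

theorem re_sum_ofReal_mul_pos {ι : Type*} [Fintype ι] {r : ι → ℝ} {a : ι → ℂ}
    (hr : 0 ≤ r) (hr0 : r ≠ 0) (ha : ∀ j, 0 < (a j).re) :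
    0 < (∑ j, (r j : ℂ) * a j).re := by
  obtain ⟨j, hj⟩ := Function.ne_iff.mp hr0
  simp only [re_sum, re_ofReal_mul]
  exact Finset.sum_pos' (fun i _ => mul_nonneg (hr i) (ha i).le)
    ⟨j, mem_univ j, mul_pos ((hr j).lt_of_ne' hj) (ha j)⟩

theorem stmt_3_general {n : ℕ} (Ω : Set (Fin n → ℂ)) (hconv : Convex ℝ Ω)
    (f : (Fin n → ℂ) → ℂ) (hf : ∀ z ∈ Ω, DifferentiableAt ℂ f z)
    (hre : ∀ z ∈ Ω, ∀ j : Fin n, 0 < (pder f z j).re) :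
    ∀ z ∈ Ω, ∀ w ∈ Ω, z ≠ w → (∀ j : Fin n, ∃ r : ℝ, 0 ≤ r ∧ w j - z j = (r : ℂ)) →
      f z ≠ f w := by
  intro z hz w hw hne hr
  choose r hr0 hrw using hr
  have hr_ne : r ≠ 0 := fun h =>
    hne (funext fun j => (sub_eq_zero.mp (by simpa [h] using hrw j)).symm)
  have hseg := hconv.segment_subset hz hw
  refine fun heq => (re_lt_re_of_re_fderiv_pos_on_segment
    (fun x hx => hf x (hseg hx)) (fun x hx => ?_)).ne (congrArg re heq)
  rw [fderiv_apply_eq_sum_pder]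
  simp only [Pi.sub_apply, hrw]
  exact re_sum_ofReal_mul_pos hr0 hr_ne (hre x (hseg hx))

/-- multidimensional Noshiro–Warschawski criterion (Corollary 2.1). -/
theorem stmt_3 {n : ℕ} (Ω : Set (Fin n → ℂ)) (hΩ : IsOpen Ω) (hconv : Convex ℝ Ω)
    (hRein : ∀ z ∈ Ω, ∀ θ : Fin n → ℝ,
      (fun j => Complex.exp ((θ j : ℂ) * Complex.I) * z j) ∈ Ω)
    (f : (Fin n → ℂ) → ℂ) (hf : ∀ z ∈ Ω, DifferentiableAt ℂ f z)
    (hre : ∀ z ∈ Ω, ∀ j : Fin n, 0 < (pder f z j).re) :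
    ∀ z ∈ Ω, ∀ w ∈ Ω, z ≠ w → (∀ j : Fin n, ∃ r : ℝ, 0 ≤ r ∧ w j - z j = (r : ℂ)) →
      f z ≠ f w :=
  stmt_3_general Ω hconv f hf hre
end

section
/- Let M > 0 and let f ∈ 𝓑_n(M). Then for every z ∈ 𝔻ⁿ and every k = 1,…,n, |Σ_{j=1}^n z_j · ∂²f/∂z_j∂z_k(z)| ≤ M·‖z‖_∞. (Schwarz-lemma step in the proof of Theorem 2.4.) -/
open Complex Finset

/-!
Directional derivatives of holomorphic maps are holomorphic. Near a point `x`, `f` is bounded,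
so by the Schwarz lemma applied to `dslope` on complex lines the difference quotients
`s⁻¹ • (f (y + s • v) - f y)` converge to `fderiv ℂ f y v` uniformly in `y`, with error
`O(‖s‖)`; and by the Cauchy estimate `‖fderiv ℂ g y‖ ≤ 2 sup ‖g‖ / r` a uniform limit of
holomorphic maps has uniformly convergent derivatives, hence is holomorphic.

Applying this twice, `H z = ∑ j, z j * ∂²f/∂z_j∂z_k (z)` is holomorphic on the polydisk, which is
the unit ball of the sup norm. It vanishes at `0` and is bounded by `M` there, since each term is
one of the summands of the defining triple sum of `𝓑_n(M)`, so the Schwarz lemma gives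
`‖H z‖ ≤ M ‖z‖`.
-/

open Metric Set Filter Topology

theorem mapsTo_closedBall_of_norm_le {α F : Type*} [NormedAddCommGroup F] {s : Set α}
    {g : α → F} {c : α} {B : ℝ} (hB : ∀ w ∈ s, ‖g w‖ ≤ B) (hc : c ∈ s) :
    MapsTo g s (closedBall (g c) (2 * B)) := fun w hw => by
  rw [mem_closedBall]
  linarith [dist_le_norm_add_norm (g w) (g c), hB w hw, hB c hc]

section

variable {F : Type*} [NormedAddCommGroup F] [NormedSpace ℂ F] [CompleteSpace F]

theorem dist_dslope_le_of_mapsTo_ball {φ : ℂ → F} {c s : ℂ} {ρ C : ℝ}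
    (hd : DifferentiableOn ℂ φ (ball c ρ)) (hmaps : MapsTo φ (ball c ρ) (closedBall (φ c) C))
    (hs : s ∈ ball c ρ) : dist (dslope φ c s) (dslope φ c c) ≤ 2 * C / ρ ^ 2 * dist s c := by
  have hρ : 0 < ρ := pos_of_mem_ball hs
  have hdd : DifferentiableOn ℂ (dslope φ c) (ball c ρ) :=
    (differentiableOn_dslope (ball_mem_nhds c hρ)).2 hd
  have hbound : ∀ t ∈ ball c ρ, ‖dslope φ c t‖ ≤ C / ρ := fun t ht =>
    norm_dslope_le_div_of_mapsTo_ball hd hmaps ht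
  calc dist (dslope φ c s) (dslope φ c c) ≤ 2 * (C / ρ) / ρ * dist s c :=
        dist_le_div_mul_dist_of_mapsTo_ball hdd
          (mapsTo_closedBall_of_norm_le hbound (mem_ball_self hρ)) hs
    _ = 2 * C / ρ ^ 2 * dist s c := by ring

end

section

variable {E F : Type*} [NormedAddCommGroup E] [NormedSpace ℂ E]
  [NormedAddCommGroup F] [NormedSpace ℂ F]

theorem norm_fderiv_le_of_norm_le_on_ball {g : E → F} {y : E} {r B : ℝ} (hr : 0 < r)
    (hd : DifferentiableOn ℂ g (ball y r)) (hB : ∀ w ∈ ball y r, ‖g w‖ ≤ B) :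
    ‖fderiv ℂ g y‖ ≤ 2 * B / r :=
  norm_fderiv_le_div_of_mapsTo_ball hd (mapsTo_closedBall_of_norm_le hB (mem_ball_self hr)) hr

theorem norm_dslope_comp_add_smul_sub_fderiv_le [CompleteSpace F] {f : E → F} {y v : E}
    {s : ℂ} {ρ C : ℝ} (hd : ∀ t ∈ ball (0 : ℂ) ρ, DifferentiableAt ℂ f (y + t • v))
    (hC : ∀ t ∈ ball (0 : ℂ) ρ, ‖f (y + t • v)‖ ≤ C) (hs : s ∈ ball (0 : ℂ) ρ) :
    ‖dslope (fun t : ℂ => f (y + t • v)) 0 s - fderiv ℂ f y v‖ ≤ 4 * C / ρ ^ 2 * ‖s‖ := by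
  have hline : ∀ t, DifferentiableAt ℂ f (y + t • v) →
      HasDerivAt (fun t : ℂ => f (y + t • v)) (fderiv ℂ f (y + t • v) v) t := fun t ht =>
    ht.hasFDerivAt.comp_hasDerivAt t (by simpa using ((hasDerivAt_id t).smul_const v).const_add y)
  have h₀ : (0 : ℂ) ∈ ball 0 ρ := mem_ball_self (pos_of_mem_ball hs)
  have hderiv := (hline 0 (hd 0 h₀)).deriv
  simp only [zero_smul, add_zero] at hderiv
  have := dist_dslope_le_of_mapsTo_ball
    (fun t ht => (hline t (hd t ht)).differentiableAt.differentiableWithinAt)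
    (mapsTo_closedBall_of_norm_le hC h₀) hs
  rw [dslope_same, hderiv, dist_eq_norm, dist_zero_right] at this
  exact this.trans_eq (by ring)

theorem UniformCauchySeqOn.fderiv_of_differentiableOn {ι : Type*} {l : Filter ι}
    {q : ι → E → F} {x : E} {r : ℝ} (hr : 0 < r) (hq : UniformCauchySeqOn q l (ball x r))
    (hd : ∀ᶠ i in l, DifferentiableOn ℂ (q i) (ball x r)) :
    UniformCauchySeqOn (fun i => fderiv ℂ (q i)) l (ball x (r / 2)) := by
  intro u hu
  obtain ⟨ε, hε, hεu⟩ := Metric.mem_uniformity_dist.1 hu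
  have hclose := hq _ (Metric.dist_mem_uniformity (by positivity : 0 < ε * r / 8))
  filter_upwards [hclose, (hd.prod_mk hd : ∀ᶠ p in l ×ˢ l, _)] with p hp ⟨hd₁, hd₂⟩ y hy
  have hsub : ball y (r / 2) ⊆ ball x r := ball_subset_ball' (by linarith [mem_ball.1 hy])
  have hdiff : DifferentiableOn ℂ (q p.1 - q p.2) (ball y (r / 2)) :=
    (hd₁.sub hd₂).mono hsub
  have hbound := norm_fderiv_le_of_norm_le_on_ball (by positivity) hdiff
    fun w hw => (dist_eq_norm (q p.1 w) (q p.2 w) ▸ hp w (hsub hw)).le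
  have hy' : ball x r ∈ 𝓝 y := isOpen_ball.mem_nhds (hsub (mem_ball_self (by positivity)))
  rw [fderiv_sub (hd₁.differentiableAt hy') (hd₂.differentiableAt hy')] at hbound
  refine hεu ((dist_eq_norm _ _).trans_le hbound |>.trans_lt ?_)
  calc 2 * (ε * r / 8) / (r / 2) = ε / 2 := by field_simp; ring
    _ < ε := half_lt_self hε

theorem TendstoUniformlyOn.differentiableAt_of_ball [CompleteSpace F] {ι : Type*}
    {l : Filter ι} [l.NeBot] {q : ι → E → F} {g : E → F} {x : E} {r : ℝ} (hr : 0 < r)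
    (hq : TendstoUniformlyOn q g l (ball x r))
    (hd : ∀ᶠ i in l, DifferentiableOn ℂ (q i) (ball x r)) : DifferentiableAt ℂ g x := by
  have hQ := hq.uniformCauchySeqOn.fderiv_of_differentiableOn hr hd
  have hlim : ∀ y ∈ ball x (r / 2), ∃ L, Tendsto (fun i => fderiv ℂ (q i) y) l (𝓝 L) :=
    fun y hy => cauchy_map_iff_exists_tendsto.1 (hQ.cauchy_map hy)
  choose! g' hg' using hlim
  have hnhds : ball x (r / 2) ∈ 𝓝 x := ball_mem_nhds x (by positivity)
  refine (hasFDerivAt_of_tendstoUniformlyOnFilter (l := l) (f := q)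
    (f' := fun i => fderiv ℂ (q i)) (g' := g') ?_ ?_ ?_).differentiableAt
  · exact (tendstoUniformlyOn_iff_tendstoUniformlyOnFilter.1
      (hQ.tendstoUniformlyOn_of_tendsto hg')).mono_right (le_principal_iff.2 hnhds)
  · filter_upwards [hd.prod_mk hnhds] with p ⟨hdp, hy⟩
    exact (hdp.differentiableAt (isOpen_ball.mem_nhds
      (ball_subset_ball (by linarith) hy))).hasFDerivAt
  · filter_upwards [hnhds] with y hy
    exact hq.tendsto_at (ball_subset_ball (by linarith) hy)

section DifferenceQuotient

variable {f : E → F} {x v : E} {r ρ : ℝ}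

theorem differentiableOn_dslope_comp_add_smul
    (hd : ∀ y ∈ ball x r, ∀ t ∈ ball (0 : ℂ) ρ, DifferentiableAt ℂ f (y + t • v)) {s : ℂ}
    (hs : s ∈ ball (0 : ℂ) ρ) (hs₀ : s ≠ 0) :
    DifferentiableOn ℂ (fun y => dslope (fun t : ℂ => f (y + t • v)) 0 s) (ball x r) := by
  intro y hy
  have hq : (fun y => dslope (fun t : ℂ => f (y + t • v)) 0 s) =
      fun y => s⁻¹ • (f (y + s • v) - f y) := by
    funext y
    simp [dslope_of_ne _ hs₀, slope_def_module]
  have h₁ : DifferentiableAt ℂ (fun y => f (y + s • v)) y :=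
    (hd y hy s hs).comp y (differentiableAt_id.add_const _)
  have h₂ : DifferentiableAt ℂ f y := by
    simpa using hd y hy 0 (mem_ball_self (pos_of_mem_ball hs))
  rw [hq]
  exact ((h₁.sub h₂).const_smul s⁻¹).differentiableWithinAt

theorem tendstoUniformlyOn_dslope_comp_add_smul [CompleteSpace F] {C : ℝ} (hρ : 0 < ρ)
    (hd : ∀ y ∈ ball x r, ∀ t ∈ ball (0 : ℂ) ρ, DifferentiableAt ℂ f (y + t • v))
    (hC : ∀ y ∈ ball x r, ∀ t ∈ ball (0 : ℂ) ρ, ‖f (y + t • v)‖ ≤ C) :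
    TendstoUniformlyOn (fun s y => dslope (fun t : ℂ => f (y + t • v)) 0 s)
      (fun y => fderiv ℂ f y v) (𝓝[≠] 0) (ball x r) := by
  rw [Metric.tendstoUniformlyOn_iff]
  intro δ hδ
  have hrate : Tendsto (fun s : ℂ => 4 * C / ρ ^ 2 * ‖s‖) (𝓝[≠] 0) (𝓝 0) := by
    refine Tendsto.mono_left ?_ nhdsWithin_le_nhds
    simpa using (continuous_norm.const_mul (4 * C / ρ ^ 2)).tendsto (0 : ℂ)
  filter_upwards [nhdsWithin_le_nhds (ball_mem_nhds 0 hρ), hrate.eventually (gt_mem_nhds hδ)]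
    with s hs hsδ y hy
  rw [dist_comm, dist_eq_norm]
  exact (norm_dslope_comp_add_smul_sub_fderiv_le (hd y hy) (hC y hy) hs).trans_lt hsδ

end DifferenceQuotient

theorem DifferentiableOn.differentiableOn_fderiv_apply [CompleteSpace F] {f : E → F}
    {U : Set E} (hf : DifferentiableOn ℂ f U) (hU : IsOpen U) (v : E) :
    DifferentiableOn ℂ (fun y => fderiv ℂ f y v) U := by
  intro x hx
  obtain ⟨ε, hε, hloc⟩ : ∃ ε > 0, ∀ y ∈ ball x ε, DifferentiableAt ℂ f y ∧ ‖f y‖ ≤ ‖f x‖ + 1 := by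
    refine Metric.eventually_nhds_iff_ball.1 ?_
    filter_upwards [hf.eventually_differentiableAt (hU.mem_nhds hx),
      (hf.differentiableAt (hU.mem_nhds hx)).continuousAt.norm.eventually
        (gt_mem_nhds (lt_add_one ‖f x‖))] with y hy₁ hy₂
    exact ⟨hy₁, hy₂.le⟩
  set r := ε / 2 with hr
  set ρ := r / (‖v‖ + 1)
  have hline : ∀ y ∈ ball x r, ∀ t ∈ ball (0 : ℂ) ρ, y + t • v ∈ ball x ε := by
    intro y hy t ht
    have htv : ‖t • v‖ < r := by
      rw [norm_smul]
      calc ‖t‖ * ‖v‖ ≤ ‖t‖ * (‖v‖ + 1) := by gcongr; linarith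
        _ < ρ * (‖v‖ + 1) := by gcongr; simpa using ht
        _ = r := div_mul_cancel₀ r (by positivity)
    rw [mem_ball, dist_eq_norm, add_sub_right_comm]
    linarith [norm_add_le (y - x) (t • v), mem_ball_iff_norm.1 hy, hr]
  have hd : ∀ y ∈ ball x r, ∀ t ∈ ball (0 : ℂ) ρ, DifferentiableAt ℂ f (y + t • v) :=
    fun y hy t ht => (hloc _ (hline y hy t ht)).1
  have hρ : 0 < ρ := by positivity
  refine (TendstoUniformlyOn.differentiableAt_of_ball (l := 𝓝[≠] 0) (by positivity : 0 < r)
    (tendstoUniformlyOn_dslope_comp_add_smul hρ hd fun y hy t ht => (hloc _ (hline y hy t ht)).2)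
    ?_).differentiableWithinAt
  filter_upwards [nhdsWithin_le_nhds (ball_mem_nhds 0 hρ), self_mem_nhdsWithin] with s hs hs₀
  exact differentiableOn_dslope_comp_add_smul hd hs hs₀

end

theorem polydisk_eq_ball (n : ℕ) : polydisk n = ball 0 1 := by
  ext z
  simp [polydisk, pi_norm_lt_iff]

theorem Finset.sum_diag_le_sum_sum_sum {ι κ : Type*} [Fintype ι] [Fintype κ]
    (a : ι → ι → κ → ℝ) (ha : ∀ l j k, 0 ≤ a l j k) (k : κ) :
    ∑ j, a j j k ≤ ∑ l, ∑ j, ∑ k', a l j k' :=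
  Finset.sum_le_sum fun l _ =>
    (Finset.single_le_sum (fun k' _ => ha l l k') (Finset.mem_univ k)).trans
      (Finset.single_le_sum (f := fun j => ∑ k', a l j k')
        (fun j _ => Finset.sum_nonneg fun k' _ => ha l j k') (Finset.mem_univ l))

theorem stmt_8_general {n : ℕ} (M : ℝ) (f : (Fin n → ℂ) → ℂ) (hf : memB n M f) :
    ∀ z ∈ polydisk n, ∀ k : Fin n,
      ‖∑ j, z j * pder2 f z j k‖ ≤ M * ‖z‖ := by
  obtain ⟨hdiff, -, -, hbound⟩ := hf
  intro z hz k
  rw [polydisk_eq_ball] at hdiff hbound hz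
  have hf₁ : DifferentiableOn ℂ f (ball 0 1) := fun w hw => (hdiff w hw).differentiableWithinAt
  have hf₂ : DifferentiableOn ℂ (fun w => pder f w k) (ball 0 1) :=
    hf₁.differentiableOn_fderiv_apply isOpen_ball _
  have hf₃ : ∀ j, DifferentiableOn ℂ (fun w => pder2 f w j k) (ball 0 1) := fun j =>
    hf₂.differentiableOn_fderiv_apply isOpen_ball _
  set H : (Fin n → ℂ) → ℂ := fun w => ∑ j, w j * pder2 f w j k
  have hH : DifferentiableOn ℂ H (ball 0 1) :=
    DifferentiableOn.fun_sum fun j _ => ((differentiable_apply j).differentiableOn).mul (hf₃ j)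
  have hmaps : MapsTo H (ball 0 1) (closedBall (H 0) M) := fun w hw => by
    simpa [H] using (norm_sum_le _ _).trans ((Finset.sum_diag_le_sum_sum_sum
      (fun l j k' => ‖w l * pder2 f w j k'‖) (fun _ _ _ => norm_nonneg _) k).trans (hbound w hw))
  simpa [H] using dist_le_div_mul_dist_of_mapsTo_ball hH hmaps hz

/-- Schwarz-lemma step in the proof of Theorem 2.4. -/
theorem stmt_8 {n : ℕ} (M : ℝ) (hM : 0 < M) (f : (Fin n → ℂ) → ℂ) (hf : memB n M f) :
    ∀ z ∈ polydisk n, ∀ k : Fin n,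
      ‖∑ j, z j * pder2 f z j k‖ ≤ M * ‖z‖ :=
  stmt_8_general M f hf
end
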